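/- Let (X^n, Y^n) be a pair of random vectors with values in {−1,1}^n × {−1,1}^n whose joint pmf p_{X^nY^n} satisfies D(p_{X^nY^n} ‖ p_{XY}^{⊗n}) ≤ ε, where p_{XY} is DSBS(q) for some 0 ≤ q ≤ 1. Then both of the following hold: (i) (1/(2 ln 2)) Σ_{i=1}^n ( E[X_i Y_i] − (1 − 2q) )² ≤ ε, and (ii) (1/(2 ln 2)) Σ_{i=1}^n ( E[X_i] )² ≤ ε. -/

import Mathlib

/-!
By the Donsker–Varadhan inequality, `E_p[f] ≤ ln 2 · D(p‖Q) + log E_Q[e^f]` for every `f`.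
Take `f = ∑ᵢ θᵢ sᵢ`, where `sᵢ` is `XᵢYᵢ` (resp. `Xᵢ`) and `θᵢ` is the deviation of `E_p[sᵢ]` from
its mean `m` under DSBS(q). Under the product law `Q` the exponential moment factorizes over
the coordinates, and Hoeffding's lemma bounds each factor by `exp (m θᵢ + θᵢ² / 2)`; the linear
terms then cancel against `E_p[f] = ∑ᵢ θᵢ (θᵢ + m)`, leaving `½ ∑ᵢ θᵢ² ≤ ln 2 · D(p‖Q)`.
-/

open Finset

def IsPMF {α : Type*} [Fintype α] (p : α → ℝ) : Prop :=
  (∀ a, 0 ≤ p a) ∧ ∑ a, p a = 1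

noncomputable def klDiv {α : Type*} [Fintype α] (p q : α → ℝ) : ℝ :=
  ∑ a, p a * Real.logb 2 (p a / q a)

noncomputable def sgn (b : Bool) : ℝ := if b then 1 else -1

noncomputable def dsbsPair (q : ℝ) (uv : Bool × Bool) : ℝ :=
  if uv.1 = uv.2 then (1 - q) / 2 else q / 2

open Real MeasureTheory ProbabilityTheory

theorem Real.mul_log_div_le_sub {p w : ℝ} (hp : 0 ≤ p) (hw : 0 ≤ w) (hwp : w = 0 → p = 0) :
    p * log (w / p) ≤ w - p := by
  rcases hp.eq_or_lt with rfl | hp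
  · simpa using hw
  have hw : 0 < w := hw.lt_of_ne fun h => hp.ne' (hwp h.symm)
  calc p * log (w / p) ≤ p * (w / p - 1) := by
        gcongr; exact log_le_sub_one_of_pos (div_pos hw hp)
    _ = w - p := by field_simp

theorem log_two_mul_klDiv {α : Type*} [Fintype α] (p Q : α → ℝ) :
    log 2 * klDiv p Q = ∑ a, p a * log (p a / Q a) := by
  rw [klDiv, mul_sum]
  refine sum_congr rfl fun a _ => ?_
  rw [logb]
  field_simp

theorem sum_mul_le_log_two_mul_klDiv_add {α : Type*} [Fintype α] {p Q : α → ℝ} (hp : IsPMF p)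
    (hQ : ∀ a, 0 ≤ Q a) (hpQ : ∀ a, Q a = 0 → p a = 0) (f : α → ℝ) {c : ℝ}
    (hc : ∑ a, Q a * exp (f a) ≤ exp c) :
    ∑ a, p a * f a ≤ log 2 * klDiv p Q + c := by
  set Z := ∑ a, Q a * exp (f a)
  have hZ : 0 < Z := by
    obtain ⟨a, -, ha⟩ := exists_ne_zero_of_sum_ne_zero (hp.2.symm ▸ one_ne_zero)
    exact sum_pos' (fun b _ => mul_nonneg (hQ b) (exp_pos _).le)
      ⟨a, mem_univ a, mul_pos ((hQ a).lt_of_ne fun h => ha (hpQ a h.symm)) (exp_pos _)⟩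
  -- Gibbs' inequality against the tilted distribution `w ∝ Q e^f`.
  set w : α → ℝ := fun a => Q a * exp (f a) / Z
  have hgibbs : ∑ a, p a * log (w a / p a) ≤ 0 := by
    calc ∑ a, p a * log (w a / p a) ≤ ∑ a, (w a - p a) := by
          refine sum_le_sum fun a _ => mul_log_div_le_sub (hp.1 a)
            (by have := hQ a; positivity) fun h => hpQ a ?_
          simpa [w, hZ.ne', exp_ne_zero] using h
      _ = 0 := by rw [sum_sub_distrib, ← sum_div, div_self hZ.ne', hp.2, sub_self]
  have hterm : ∀ a, p a * log (w a / p a) =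
      p a * f a - p a * log Z - p a * log (p a / Q a) := by
    intro a
    rcases (hp.1 a).eq_or_lt with h | h
    · simp [← h]
    have hQa : 0 < Q a := (hQ a).lt_of_ne fun h' => h.ne' (hpQ a h'.symm)
    rw [show w a / p a = (p a / Q a)⁻¹ * exp (f a) / Z by simp only [w]; field_simp,
      log_div (by positivity) hZ.ne', log_mul (by positivity) (exp_ne_zero _), log_inv, log_exp]
    ring
  have hlogZ : log Z ≤ c := (log_le_iff_le_exp hZ).2 hc
  simp only [hterm, sum_sub_distrib, ← sum_mul, hp.2, one_mul] at hgibbs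
  rw [log_two_mul_klDiv]
  linarith

theorem half_sum_sq_sub_le_log_two_mul_klDiv {Ω ι : Type*} [Fintype Ω] [Fintype ι]
    {p Q : Ω → ℝ} (hp : IsPMF p) (hQ : ∀ ω, 0 ≤ Q ω) (hpQ : ∀ ω, Q ω = 0 → p ω = 0)
    (s : ι → Ω → ℝ) (m : ι → ℝ)
    (hmgf : ∀ L : ι → ℝ,
      ∑ ω, Q ω * exp (∑ i, L i * s i ω) ≤ exp (∑ i, (m i * L i + L i ^ 2 / 2))) :
    1 / 2 * ∑ i, (∑ ω, s i ω * p ω - m i) ^ 2 ≤ log 2 * klDiv p Q := by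
  set θ : ι → ℝ := fun i => ∑ ω, s i ω * p ω - m i
  have hdv := sum_mul_le_log_two_mul_klDiv_add hp hQ hpQ (fun ω => ∑ i, θ i * s i ω) (hmgf θ)
  have hmean : ∑ ω, p ω * ∑ i, θ i * s i ω = ∑ i, θ i * (θ i + m i) := by
    simp only [mul_sum, θ, sub_add_cancel]
    rw [sum_comm]
    exact sum_congr rfl fun i _ => sum_congr rfl fun ω _ => by ring
  have hsq : ∑ i, θ i * (θ i + m i) - ∑ i, (m i * θ i + θ i ^ 2 / 2) = 1 / 2 * ∑ i, θ i ^ 2 := by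
    rw [← sum_sub_distrib, mul_sum]
    exact sum_congr rfl fun i _ => by ring
  linarith

theorem sum_prod_mul_exp_sum_le {ι β γ : Type*} [Fintype ι] [DecidableEq ι] [Fintype β]
    [Fintype γ] {P : β × γ → ℝ} (hP : ∀ uv, 0 ≤ P uv) (g : β × γ → ℝ) (m : ℝ)
    (hg : ∀ l, ∑ uv, P uv * exp (l * g uv) ≤ exp (m * l + l ^ 2 / 2)) (L : ι → ℝ) :
    ∑ xy : (ι → β) × (ι → γ), (∏ i, P (xy.1 i, xy.2 i)) * exp (∑ i, L i * g (xy.1 i, xy.2 i))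
      ≤ exp (∑ i, (m * L i + L i ^ 2 / 2)) := by
  calc ∑ xy : (ι → β) × (ι → γ), (∏ i, P (xy.1 i, xy.2 i)) * exp (∑ i, L i * g (xy.1 i, xy.2 i))
      = ∏ i, ∑ uv, P uv * exp (L i * g uv) := by
        rw [Fintype.prod_sum]
        refine (Fintype.sum_equiv (Equiv.arrowProdEquivProdArrow ι (fun _ => β) (fun _ => γ))
          _ _ fun x => ?_).symm
        simp only [exp_sum, ← prod_mul_distrib]
        rfl
    _ ≤ ∏ i, exp (m * L i + L i ^ 2 / 2) :=
        prod_le_prod (fun i _ => sum_nonneg fun uv _ => mul_nonneg (hP uv) (exp_pos _).le)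
          fun i _ => hg (L i)
    _ = exp (∑ i, (m * L i + L i ^ 2 / 2)) := (exp_sum _ _).symm

theorem two_point_mgf_le {q : ℝ} (hq0 : 0 ≤ q) (hq1 : q ≤ 1) (l : ℝ) :
    (1 - q) * exp l + q * exp (-l) ≤ exp ((1 - 2 * q) * l + l ^ 2 / 2) := by
  set μ : Measure ℝ :=
    ENNReal.ofReal (1 - q) • Measure.dirac 1 + ENNReal.ofReal q • Measure.dirac (-1)
  have : IsProbabilityMeasure μ := ⟨by
    simp only [μ, Measure.add_apply, Measure.smul_apply, measure_univ, smul_eq_mul, mul_one]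
    rw [← ENNReal.ofReal_add (by linarith) hq0, sub_add_cancel, ENNReal.ofReal_one]⟩
  have hint (f : ℝ → ℝ) : ∫ x, f x ∂μ = (1 - q) * f 1 + q * f (-1) := by
    rw [integral_add_measure, integral_smul_measure, integral_smul_measure]
    · simp [hq0, sub_nonneg.2 hq1]
    all_goals exact (integrable_dirac (by simp)).smul_measure (by simp)
  have hbdd : ∀ᵐ x ∂μ, x ∈ Set.Icc (-1 : ℝ) 1 := by
    rw [ae_add_measure_iff]
    exact ⟨Measure.ae_smul_measure ((ae_dirac_iff measurableSet_Icc).2 (by norm_num)) _,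
      Measure.ae_smul_measure ((ae_dirac_iff measurableSet_Icc).2 (by norm_num)) _⟩
  have hoeffding :=
    (hasSubgaussianMGF_of_mem_Icc (X := fun x => x) aemeasurable_id hbdd).mgf_le l
  have hmean : μ[fun x => x] = 1 - 2 * q := by rw [hint]; ring
  have hvar : ((‖(1 : ℝ) - -1‖₊ / 2) ^ 2 : NNReal) = 1 := by norm_num
  rw [mgf, hmean, hint] at hoeffding
  simp only [hvar, NNReal.coe_one, one_mul] at hoeffding
  calc (1 - q) * exp l + q * exp (-l)
      = exp ((1 - 2 * q) * l) *
          ((1 - q) * exp (l * (1 - (1 - 2 * q))) + q * exp (l * (-1 - (1 - 2 * q)))) := by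
        rw [mul_add, mul_left_comm, mul_left_comm (exp _) q, ← exp_add, ← exp_add]
        ring_nf
    _ ≤ exp ((1 - 2 * q) * l) * exp (l ^ 2 / 2) := by gcongr
    _ = exp ((1 - 2 * q) * l + l ^ 2 / 2) := (exp_add _ _).symm

theorem dsbsPair_nonneg {q : ℝ} (hq0 : 0 ≤ q) (hq1 : q ≤ 1) (uv : Bool × Bool) :
    0 ≤ dsbsPair q uv := by
  unfold dsbsPair
  split_ifs <;> linarith

theorem sum_dsbsPair_mul_exp_sgn_mul_sgn (q l : ℝ) :
    ∑ uv, dsbsPair q uv * exp (l * (sgn uv.1 * sgn uv.2)) = (1 - q) * exp l + q * exp (-l) := by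
  simp [Fintype.sum_prod_type, dsbsPair, sgn]
  ring

theorem sum_dsbsPair_mul_exp_sgn (q l : ℝ) :
    ∑ uv, dsbsPair q uv * exp (l * sgn uv.1) = cosh l := by
  simp [Fintype.sum_prod_type, dsbsPair, sgn, cosh_eq]
  ring

/-- Lemma 9 of the paper: if `D(p_{X^nY^n} ‖ DSBS(q)^{⊗n}) ≤ ε` then
(i) `(1/(2 ln 2)) Σ_i (E[X_iY_i] - (1-2q))² ≤ ε` and
(ii) `(1/(2 ln 2)) Σ_i (E[X_i])² ≤ ε`. -/
theorem stmt12 (q ε : ℝ) (hq0 : 0 ≤ q) (hq1 : q ≤ 1) (n : ℕ)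
    (pJ : (Fin n → Bool) × (Fin n → Bool) → ℝ) (hpJ : IsPMF pJ)
    -- absolute continuity (implicit in `D ≤ ε < ∞` with the `+∞` convention)
    (habs : ∀ xy : (Fin n → Bool) × (Fin n → Bool),
      (∏ i, dsbsPair q (xy.1 i, xy.2 i)) = 0 → pJ xy = 0)
    (hD : klDiv pJ (fun xy => ∏ i, dsbsPair q (xy.1 i, xy.2 i)) ≤ ε) :
    (1 / (2 * Real.log 2)) * (∑ i : Fin n,
        ((∑ xy : (Fin n → Bool) × (Fin n → Bool), sgn (xy.1 i) * sgn (xy.2 i) * pJ xy)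
          - (1 - 2 * q)) ^ 2) ≤ ε ∧
    (1 / (2 * Real.log 2)) * (∑ i : Fin n,
        (∑ xy : (Fin n → Bool) × (Fin n → Bool), sgn (xy.1 i) * pJ xy) ^ 2) ≤ ε := by
  have hQ (xy : (Fin n → Bool) × (Fin n → Bool)) : 0 ≤ ∏ i, dsbsPair q (xy.1 i, xy.2 i) :=
    prod_nonneg fun i _ => dsbsPair_nonneg hq0 hq1 _
  have hbits (S : ℝ)
      (hS : 1 / 2 * S ≤ log 2 * klDiv pJ (fun xy => ∏ i, dsbsPair q (xy.1 i, xy.2 i))) :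
      1 / (2 * log 2) * S ≤ ε := by
    have hlog2 : 0 < log 2 := log_pos one_lt_two
    rw [one_div, inv_mul_le_iff₀ (by positivity)]
    linarith [mul_le_mul_of_nonneg_left hD hlog2.le]
  constructor
  · refine hbits _ (half_sum_sq_sub_le_log_two_mul_klDiv hpJ hQ habs
      (fun i xy => sgn (xy.1 i) * sgn (xy.2 i)) (fun _ => 1 - 2 * q)
      (sum_prod_mul_exp_sum_le (dsbsPair_nonneg hq0 hq1) (fun uv => sgn uv.1 * sgn uv.2) _
        fun l => ?_))
    rw [sum_dsbsPair_mul_exp_sgn_mul_sgn]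
    exact two_point_mgf_le hq0 hq1 l
  · have := half_sum_sq_sub_le_log_two_mul_klDiv hpJ hQ habs (fun i xy => sgn (xy.1 i))
      (fun _ => 0)
      (sum_prod_mul_exp_sum_le (dsbsPair_nonneg hq0 hq1) (fun uv => sgn uv.1) 0 fun l => by
        rw [sum_dsbsPair_mul_exp_sgn, zero_mul, zero_add]
        exact cosh_le_exp_half_sq l)
    simp only [sub_zero] at this
    exact hbits _ this
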